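/- Let K ≥ 0 and let G : ℝ → ℝ be a measurable, nonnegative function vanishing on (−∞,0) such that ∫₀^∞ G(t) dt = 1 and G(t) ≤ K · t^{−3/2} for all t > 0. Then for every n ≥ 1 and every t > 0, the n-th convolution power satisfies G^{∗n}(t) ≤ K · n^{5/2} · t^{−3/2}. -/

import Mathlib

/-!
For any exponent `α ≥ 0`, `G^{∗n}(t) ≤ K n^(1 + α) t^(-α)` by induction on `n`. Write
`F = G^{∗n}` and split `(F ∗ G)(t) = ∫₀ᵗ F(s) G(t - s) ds` at `s = a`: for `s ≤ a` bound
`G(t - s)` by `K (t - a)^(-α)` and use `∫ F ≤ 1`; for `s > a` bound `F(s)` by the induction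
hypothesis at `a` and use `∫ G ≤ 1`. Taking `a = n t / (n + 1)` the two pieces add up to
`K (n + 1)^(1 + α) t^(-α)`, and total masses multiply under convolution, so `∫ F ≤ 1` propagates.
The estimates are made on the `ℝ≥0∞`-valued convolution of the positive parts, which dominates
`conv f g t` for `t ≥ 0` and needs no integrability.
-/

open Filter Set MeasureTheory

/-- Convolution of two functions vanishing on `(-∞,0)`:
`(f ∗ g)(t) = ∫₀ᵗ f(s) g(t-s) ds`. -/
noncomputable def conv (f g : ℝ → ℝ) : ℝ → ℝ :=
  fun t => ∫ s in (0:ℝ)..t, f s * g (t - s)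

/-- `convPow G n` is the `(n+1)`-st convolution power `G^{∗(n+1)}`:
`convPow G 0 = G` and `convPow G (n+1) = (convPow G n) ∗ G`. -/
noncomputable def convPow (G : ℝ → ℝ) : ℕ → ℝ → ℝ
  | 0 => G
  | n + 1 => conv (convPow G n) G

open scoped ENNReal

theorem ofReal_integral_le_lintegral_ofReal {α : Type*} [MeasurableSpace α] {μ : Measure α}
    (f : α → ℝ) : ENNReal.ofReal (∫ x, f x ∂μ) ≤ ∫⁻ x, ENNReal.ofReal (f x) ∂μ := by
  by_cases hf : Integrable f μ
  · rw [integral_eq_lintegral_pos_part_sub_lintegral_neg_part hf]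
    exact (ENNReal.ofReal_le_ofReal (sub_le_self _ ENNReal.toReal_nonneg)).trans
      ENNReal.ofReal_toReal_le
  · simp [integral_undef hf]

theorem lintegral_lconvolution {G : Type*} [MeasurableSpace G] [AddGroup G] [MeasurableAdd₂ G]
    [MeasurableNeg G] {μ : Measure G} [μ.IsAddLeftInvariant] [SFinite μ] {f g : G → ℝ≥0∞}
    (hf : Measurable f) (hg : Measurable g) :
    ∫⁻ x, (f ⋆ₗ[μ] g) x ∂μ = (∫⁻ x, f x ∂μ) * ∫⁻ x, g x ∂μ := by
  simp_rw [lconvolution_def]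
  rw [lintegral_lintegral_swap (by fun_prop)]
  have hinner : ∀ y, ∫⁻ x, f y * g (-y + x) ∂μ = f y * ∫⁻ x, g x ∂μ := fun y ↦ by
    rw [lintegral_const_mul _ (by fun_prop), lintegral_add_left_eq_self]
  simp_rw [hinner]
  exact lintegral_mul_const _ hf

theorem lconvolution_le_add {f g : ℝ → ℝ≥0∞} (hf : Measurable f) (hg : Measurable g)
    {a t : ℝ} {c d : ℝ≥0∞} (hfc : ∀ s, a < s → f s ≤ c) (hgd : ∀ u, t - a ≤ u → g u ≤ d) :
    (f ⋆ₗ g) t ≤ (∫⁻ x, f x) * d + c * ∫⁻ x, g x := by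
  have hpoint : ∀ s, f s * g (t - s) ≤ f s * d + c * g (t - s) := fun s ↦ by
    rcases lt_or_ge a s with has | hsa
    · exact le_add_left (mul_le_mul_left (hfc s has) _)
    · exact le_add_right (mul_le_mul_right (hgd _ (by linarith)) _)
  calc (f ⋆ₗ g) t = ∫⁻ s, f s * g (t - s) := by simp_rw [lconvolution_def, neg_add_eq_sub]
    _ ≤ ∫⁻ s, f s * d + c * g (t - s) := lintegral_mono hpoint
    _ = (∫⁻ x, f x) * d + c * ∫⁻ x, g x := by
      rw [lintegral_add_left (hf.mul_const d), lintegral_mul_const d hf,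
        lintegral_const_mul c (by fun_prop), lintegral_sub_left_eq_self]

theorem measurable_conv {f g : ℝ → ℝ} (hf : Measurable f) (hg : Measurable g) :
    Measurable (conv f g) := by
  have hIoc : ∀ a b : ℝ → ℝ, Measurable a → Measurable b →
      Measurable fun t ↦ ∫ s in Ioc (a t) (b t), f s * g (t - s) := by
    intro a b ha hb
    have hjoint : Measurable fun p : ℝ × ℝ ↦
        if a p.1 < p.2 ∧ p.2 ≤ b p.1 then f p.2 * g (p.1 - p.2) else 0 :=
      Measurable.ite ((measurableSet_lt (ha.comp measurable_fst) measurable_snd).inter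
        (measurableSet_le measurable_snd (hb.comp measurable_fst))) (by fun_prop) measurable_const
    convert (hjoint.stronglyMeasurable.integral_prod_right' (ν := volume)).measurable using 1
    funext t
    rw [← integral_indicator measurableSet_Ioc]
    simp only [indicator, mem_Ioc]
  exact (hIoc _ _ measurable_const measurable_id).sub (hIoc _ _ measurable_id measurable_const)

theorem ofReal_conv_le_lconvolution {f g : ℝ → ℝ} (hg : ∀ u, 0 ≤ g u) {t : ℝ} (ht : 0 ≤ t) :
    ENNReal.ofReal (conv f g t) ≤
      ((Ioi 0).indicator (ENNReal.ofReal ∘ f) ⋆ₗ (Ici 0).indicator (ENNReal.ofReal ∘ g)) t := by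
  rw [conv, intervalIntegral.integral_of_le ht, lconvolution_def]
  refine (ofReal_integral_le_lintegral_ofReal _).trans_eq ?_
  rw [← lintegral_indicator measurableSet_Ioc]
  refine lintegral_congr fun s ↦ ?_
  by_cases h0 : 0 < s <;> by_cases hst : s ≤ t <;>
    simp [indicator, h0, hst, ENNReal.ofReal_mul' (hg _), sub_nonneg, neg_add_eq_sub]

theorem lintegral_conv_le_mul {f g : ℝ → ℝ} (hf : Measurable f) (hg : Measurable g)
    (hg0 : ∀ u, 0 ≤ g u) :
    ∫⁻ t in Ioi 0, ENNReal.ofReal (conv f g t) ≤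
      (∫⁻ t in Ioi 0, ENNReal.ofReal (f t)) * ∫⁻ t in Ioi 0, ENNReal.ofReal (g t) := by
  set f' := (Ioi (0 : ℝ)).indicator (ENNReal.ofReal ∘ f)
  set g' := (Ici (0 : ℝ)).indicator (ENNReal.ofReal ∘ g)
  calc ∫⁻ t in Ioi 0, ENNReal.ofReal (conv f g t)
      ≤ ∫⁻ t in Ioi 0, (f' ⋆ₗ g') t :=
        setLIntegral_mono' measurableSet_Ioi fun t ht ↦
          ofReal_conv_le_lconvolution hg0 (le_of_lt ht)
    _ ≤ ∫⁻ t, (f' ⋆ₗ g') t := setLIntegral_le_lintegral _ _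
    _ = (∫⁻ t, f' t) * ∫⁻ t, g' t :=
        lintegral_lconvolution (hf.ennreal_ofReal.indicator measurableSet_Ioi)
          (hg.ennreal_ofReal.indicator measurableSet_Ici)
    _ = _ := by
      rw [lintegral_indicator measurableSet_Ioi, lintegral_indicator measurableSet_Ici,
        setLIntegral_congr Ioi_ae_eq_Ici.symm]
      rfl

theorem conv_le_add {f g : ℝ → ℝ} (hf : Measurable f) (hg : Measurable g) (hg0 : ∀ u, 0 ≤ g u)
    (hf1 : ∫⁻ t in Ioi 0, ENNReal.ofReal (f t) ≤ 1) (hg1 : ∫⁻ t in Ioi 0, ENNReal.ofReal (g t) ≤ 1)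
    {a t c d : ℝ} (ht : 0 ≤ t) (hc : 0 ≤ c) (hd : 0 ≤ d)
    (hfc : ∀ s, a < s → f s ≤ c) (hgd : ∀ u, t - a ≤ u → g u ≤ d) :
    conv f g t ≤ d + c := by
  set f' := (Ioi (0 : ℝ)).indicator (ENNReal.ofReal ∘ f)
  set g' := (Ici (0 : ℝ)).indicator (ENNReal.ofReal ∘ g)
  have hf' : ∫⁻ x, f' x ≤ 1 := by rwa [lintegral_indicator measurableSet_Ioi]
  have hg' : ∫⁻ x, g' x ≤ 1 := by
    rwa [lintegral_indicator measurableSet_Ici, ← setLIntegral_congr Ioi_ae_eq_Ici]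
  rw [← ENNReal.ofReal_le_ofReal_iff (add_nonneg hd hc), ENNReal.ofReal_add hd hc]
  calc ENNReal.ofReal (conv f g t)
      ≤ (f' ⋆ₗ g') t := ofReal_conv_le_lconvolution hg0 ht
    _ ≤ (∫⁻ x, f' x) * ENNReal.ofReal d + ENNReal.ofReal c * ∫⁻ x, g' x :=
        lconvolution_le_add (hf.ennreal_ofReal.indicator measurableSet_Ioi)
          (hg.ennreal_ofReal.indicator measurableSet_Ici)
          (fun s hs ↦ indicator_apply_le' (fun _ ↦ ENNReal.ofReal_le_ofReal (hfc s hs))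
            fun _ ↦ zero_le)
          (fun u hu ↦ indicator_apply_le' (fun _ ↦ ENNReal.ofReal_le_ofReal (hgd u hu))
            fun _ ↦ zero_le)
    _ ≤ 1 * ENNReal.ofReal d + ENNReal.ofReal c * 1 := by gcongr
    _ = ENNReal.ofReal d + ENNReal.ofReal c := by rw [one_mul, mul_one]

theorem measurable_convPow {G : ℝ → ℝ} (hG : Measurable G) : ∀ n, Measurable (convPow G n)
  | 0 => hG
  | n + 1 => measurable_conv (measurable_convPow hG n) hG

theorem lintegral_convPow_le_one {G : ℝ → ℝ} (hG : Measurable G) (hG0 : ∀ t, 0 ≤ G t)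
    (hG1 : ∫⁻ t in Ioi 0, ENNReal.ofReal (G t) ≤ 1) :
    ∀ n, ∫⁻ t in Ioi 0, ENNReal.ofReal (convPow G n t) ≤ 1
  | 0 => hG1
  | n + 1 => (lintegral_conv_le_mul (measurable_convPow hG n) hG hG0).trans
      (mul_le_one' (lintegral_convPow_le_one hG hG0 hG1 n) hG1)

theorem le_mul_rpow_neg_of_le {F : ℝ → ℝ} {C α a u : ℝ} (hC : 0 ≤ C) (hα : 0 ≤ α)
    (hF : ∀ u, 0 < u → F u ≤ C * u ^ (-α)) (ha : 0 < a) (hau : a ≤ u) :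
    F u ≤ C * a ^ (-α) :=
  (hF u (ha.trans_le hau)).trans
    (mul_le_mul_of_nonneg_left (Real.rpow_le_rpow_of_nonpos ha hau (neg_nonpos.2 hα)) hC)

theorem rpow_one_add_mul_mul_rpow_neg {N x : ℝ} (hN : 0 < N) (hx : 0 < x) (α : ℝ) :
    N ^ (1 + α) * (N * x) ^ (-α) = N * x ^ (-α) := by
  rw [Real.mul_rpow hN.le hx.le, Real.rpow_add hN, Real.rpow_one, Real.rpow_neg hN.le]
  field_simp

theorem convPow_le_mul_rpow {G : ℝ → ℝ} {K α : ℝ} (hK : 0 ≤ K) (hα : 0 ≤ α)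
    (hG : Measurable G) (hG0 : ∀ t, 0 ≤ G t) (hG1 : ∫⁻ t in Ioi 0, ENNReal.ofReal (G t) ≤ 1)
    (hGK : ∀ t, 0 < t → G t ≤ K * t ^ (-α)) (n : ℕ) :
    ∀ t, 0 < t → convPow G n t ≤ K * ((n + 1 : ℕ) : ℝ) ^ (1 + α) * t ^ (-α) := by
  induction n with
  | zero => simpa [convPow] using hGK
  | succ n ih =>
    intro t ht
    set N : ℝ := ((n + 1 : ℕ) : ℝ)
    have hN : 0 < N := by positivity
    -- split `(0, t]` at `N t / (N + 1)`: the two pieces then contribute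
    -- `K (N + 1) ^ α t ^ (-α)` and `K N (N + 1) ^ α t ^ (-α)`
    set x := t / (N + 1)
    have hx : 0 < x := by positivity
    have htx : t = (N + 1) * x := by simp only [x]; field_simp
    have hcast : ((n + 1 + 1 : ℕ) : ℝ) = N + 1 := by push_cast [N]; ring
    have hNK : 0 ≤ K * N ^ (1 + α) := by positivity
    calc convPow G (n + 1) t
        ≤ K * x ^ (-α) + K * N ^ (1 + α) * (N * x) ^ (-α) :=
          conv_le_add (measurable_convPow hG n) hG hG0 (lintegral_convPow_le_one hG hG0 hG1 n)
            hG1 ht.le (by positivity) (by positivity)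
            (fun s hs ↦ le_mul_rpow_neg_of_le hNK hα ih (by positivity) hs.le)
            (fun u hu ↦ le_mul_rpow_neg_of_le hK hα hGK hx (by linarith))
      _ = K * ((n + 1 + 1 : ℕ) : ℝ) ^ (1 + α) * t ^ (-α) := by
          rw [hcast, htx, mul_assoc, mul_assoc, rpow_one_add_mul_mul_rpow_neg hN hx,
            rpow_one_add_mul_mul_rpow_neg (by positivity) hx]
          ring

theorem convolution_power_bound_general (K : ℝ) (hK : 0 ≤ K)
    (G : ℝ → ℝ) (hm : Measurable G) (hnn : ∀ t, 0 ≤ G t)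
    (hint : ∫⁻ t in Ioi (0:ℝ), ENNReal.ofReal (G t) = 1)
    (hb : ∀ t, 0 < t → G t ≤ K * t ^ (-(3:ℝ)/2)) :
    ∀ n : ℕ, ∀ t : ℝ, 0 < t →
      convPow G n t ≤ K * ((n + 1 : ℕ) : ℝ) ^ ((5:ℝ)/2) * t ^ (-(3:ℝ)/2) := by
  intro n
  convert convPow_le_mul_rpow (α := 3 / 2) hK (by norm_num) hm hnn hint.le
    (by simpa only [neg_div] using hb) n using 6 <;> norm_num

/-- Final step in the proof of Lemma 3.8: if `G` is nonnegative, vanishes on `(-∞,0)`,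
has integral one, and `G t ≤ K t^(-3/2)`, then the `n`-th convolution power satisfies
`G^{∗n}(t) ≤ K n^{5/2} t^{-3/2}` for every `n ≥ 1` (here `convPow G n = G^{∗(n+1)}`). -/
theorem convolution_power_bound (K : ℝ) (hK : 0 ≤ K)
    (G : ℝ → ℝ) (hm : Measurable G) (hnn : ∀ t, 0 ≤ G t)
    (hz : ∀ t < (0:ℝ), G t = 0)
    (hint : ∫⁻ t in Ioi (0:ℝ), ENNReal.ofReal (G t) = 1)
    (hb : ∀ t, 0 < t → G t ≤ K * t ^ (-(3:ℝ)/2)) :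
    ∀ n : ℕ, ∀ t : ℝ, 0 < t →
      convPow G n t ≤ K * ((n + 1 : ℕ) : ℝ) ^ ((5:ℝ)/2) * t ^ (-(3:ℝ)/2) :=
  convolution_power_bound_general K hK G hm hnn hint hb
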